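/- Assume (B2) holds, let {b_j : j ≥ 1} be a Δ-orthonormal sequence of DBS eigenfunctions, and set h_j := Δb_j. Then each h_j is a weakly harmonic function on Ω, so h_j ∈ L²_H(Ω), and the family {h_j : j ≥ 1} is orthonormal in L²(Ω). -/

import Mathlib

open MeasureTheory Filter Set Topology
open scoped ENNReal

noncomputable section

/-- Euclidean `N`-space. -/
abbrev Euc (N : ℕ) : Type := EuclideanSpace ℝ (Fin N)

variable {N : ℕ}


/-- The real inner (dot) product on `Euc N`. -/
def rip {N : ℕ} (a b : Euc N) : ℝ := inner ℝ a b

/-- Lebesgue measure restricted to `Ω`. -/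
def volΩ (Ω : Set (Euc N)) : Measure (Euc N) := volume.restrict Ω

/-- The surface measure `σ` on the boundary of `Ω`:
`(N-1)`-dimensional Hausdorff measure restricted to `∂Ω = frontier Ω`. -/
def surf (Ω : Set (Euc N)) : Measure (Euc N) :=
  (μH[(N : ℝ) - 1]).restrict (frontier Ω)

/-- Smooth test functions with compact support contained in `Ω` (the class `C_c^∞(Ω)`). -/
def IsTestFun (Ω : Set (Euc N)) (φ : Euc N → ℝ) : Prop :=
  ContDiff ℝ (⊤ : ℕ∞) φ ∧ HasCompactSupport φ ∧ tsupport φ ⊆ Ω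

/-- The class `C_c²(Ω)` of twice continuously differentiable functions with
compact support contained in `Ω`. -/
def IsCc2Fun (Ω : Set (Euc N)) (φ : Euc N → ℝ) : Prop :=
  ContDiff ℝ 2 φ ∧ HasCompactSupport φ ∧ tsupport φ ⊆ Ω

/-- The `i`-th (classical) partial derivative. -/
def pder (φ : Euc N → ℝ) (i : Fin N) (x : Euc N) : ℝ :=
  fderiv ℝ φ x (EuclideanSpace.single i 1)

/-- The classical gradient, as a vector in `Euc N`. -/
def clGrad (φ : Euc N → ℝ) (x : Euc N) : Euc N :=
  (WithLp.equiv 2 (Fin N → ℝ)).symm (fun i => pder φ i x)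

/-- The classical Laplacian `Δφ = ∑ ∂²φ/∂xᵢ²`. -/
def clLap (φ : Euc N → ℝ) (x : Euc N) : ℝ :=
  ∑ i, pder (pder φ i) i x

/-- `G` is the weak gradient of `u` on `Ω`. -/
def HasWeakGrad (Ω : Set (Euc N)) (u : Euc N → ℝ) (G : Euc N → Euc N) : Prop :=
  ∀ φ, IsTestFun Ω φ → ∀ i : Fin N,
    ∫ x in Ω, u x * pder φ i x = - ∫ x in Ω, G x i * φ x

/-- `w` is the weak divergence of the vector field `G` on `Ω`. -/
def HasWeakDiv (Ω : Set (Euc N)) (G : Euc N → Euc N) (w : Euc N → ℝ) : Prop :=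
  ∀ φ, IsTestFun Ω φ →
    ∫ x in Ω, (∑ i, G x i * pder φ i x) = - ∫ x in Ω, w x * φ x

/-- An element of the Sobolev space `H¹(Ω)`: an `L²` function together with an
`L²` weak gradient. -/
structure H1Fun (Ω : Set (Euc N)) where
  u : Euc N → ℝ
  grad : Euc N → Euc N
  u_mem : MemLp u 2 (volΩ Ω)
  grad_mem : MemLp grad 2 (volΩ Ω)
  weak_grad : HasWeakGrad Ω u grad

/-- Membership in `H¹₀(Ω)`: `f` is an `H¹`-limit of test functions. -/
def IsH10 {Ω : Set (Euc N)} (f : H1Fun Ω) : Prop :=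
  ∃ φ : ℕ → Euc N → ℝ, (∀ n, IsTestFun Ω (φ n)) ∧
    Tendsto (fun n =>
      eLpNorm (fun x => f.u x - φ n x) 2 (volΩ Ω) +
      eLpNorm (fun x => f.grad x - clGrad (φ n) x) 2 (volΩ Ω)) atTop (𝓝 0)

/-- An `H¹` function is harmonic on `Ω` iff `∫ ∇u·∇v = 0` for all `v ∈ H¹₀(Ω)`. -/
def IsHarmonicH1 {Ω : Set (Euc N)} (f : H1Fun Ω) : Prop :=
  ∀ v : H1Fun Ω, IsH10 v → ∫ x in Ω, rip (f.grad x) (v.grad x) = 0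

/-- An element of `H(Δ,Ω)`: an `H¹(Ω)` function whose weak Laplacian is in `L²(Ω)`. -/
structure HDFun (Ω : Set (Euc N)) extends H1Fun Ω where
  lap : Euc N → ℝ
  lap_mem : MemLp lap 2 (volΩ Ω)
  weak_lap : HasWeakDiv Ω grad lap

/-- An element of `H₀(Δ,Ω) = H(Δ,Ω) ∩ H¹₀(Ω)`. -/
structure H0DFun (Ω : Set (Euc N)) extends HDFun Ω where
  bc : IsH10 toH1Fun

/-- The `Δ`-inner product `[u,v]_Δ = ∫_Ω Δu Δv dx` on `H₀(Δ,Ω)`. -/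
def lapIP {Ω : Set (Euc N)} (f g : H0DFun Ω) : ℝ := ∫ x in Ω, f.lap x * g.lap x

/-- The squared `Δ`-norm `‖u‖_Δ² = ∫_Ω |Δu|² dx`. -/
def deltaNormSq {Ω : Set (Euc N)} (f : H0DFun Ω) : ℝ := ∫ x in Ω, (f.lap x) ^ 2

/-- A function in `H(Δ,Ω)` is weakly biharmonic if `∫_Ω Δb Δφ = 0` for all `φ ∈ C_c²(Ω)`. -/
def IsBiharmonic {Ω : Set (Euc N)} (f : HDFun Ω) : Prop :=
  ∀ φ, IsCc2Fun Ω φ → ∫ x in Ω, f.lap x * clLap φ x = 0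

/-- Membership in the harmonic Bergman space `L²_H(Ω)`:
`h ∈ L²(Ω)` and `∫_Ω h Δφ = 0` for all `φ ∈ C_c²(Ω)`. -/
def MemL2H (Ω : Set (Euc N)) (h : Euc N → ℝ) : Prop :=
  MemLp h 2 (volΩ Ω) ∧ ∀ φ, IsCc2Fun Ω φ → ∫ x in Ω, h x * clLap φ x = 0

/-- `lam` is an eigenvalue of the Dirichlet Laplacian on `Ω`. -/
def IsDirEV (Ω : Set (Euc N)) (lam : ℝ) : Prop :=
  ∃ e : H1Fun Ω, IsH10 e ∧ ¬(e.u =ᵐ[volΩ Ω] (0 : Euc N → ℝ)) ∧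
    ∀ v : H1Fun Ω, IsH10 v →
      ∫ x in Ω, rip (e.grad x) (v.grad x) = lam * ∫ x in Ω, e.u x * v.u x

/-- A bounded region satisfying hypothesis (B1), together with the boundary
objects whose existence (B1) guarantees: the outward unit normal `ν`, the
boundary trace operator `γ` on `H¹(Ω)` (characterized by compatibility with
continuous functions and the Gauss-Green theorem), and the normal derivative
operator `D_ν` on `H₀(Δ,Ω)` (characterized by Green's identity). -/
structure B1Setting (N : ℕ) : Type where
  /-- the region -/
  Ω : Set (Euc N)
  conn : IsConnected Ω
  opn : IsOpen Ω
  bdd : Bornology.IsBounded Ω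
  /-- the boundary has finite surface measure -/
  fin_bdry : surf Ω univ < ⊤
  /-- the outward unit normal vector field -/
  ν : Euc N → Euc N
  ν_unit : ∀ᵐ z ∂(surf Ω), ‖ν z‖ = 1
  /-- the boundary trace operator `γ : H¹(Ω) → L²(∂Ω, dσ)` -/
  trace : H1Fun Ω → Euc N → ℝ
  trace_mem : ∀ f, MemLp (trace f) 2 (surf Ω)
  trace_of_continuous : ∀ f : H1Fun Ω, ContinuousOn f.u (closure Ω) →
    trace f =ᵐ[surf Ω] f.u
  trace_congr : ∀ f g : H1Fun Ω, f.u =ᵐ[volΩ Ω] g.u → trace f =ᵐ[surf Ω] trace g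
  trace_zero : ∀ f : H1Fun Ω, IsH10 f → trace f =ᵐ[surf Ω] (0 : Euc N → ℝ)
  /-- the Gauss-Green theorem `∫_Ω u D_i v + ∫_Ω v D_i u = ∫_∂Ω γu γv νᵢ dσ` -/
  gauss_green : ∀ f g : H1Fun Ω, ∀ i : Fin N,
    (∫ x in Ω, f.u x * g.grad x i) + (∫ x in Ω, g.u x * f.grad x i)
      = ∫ z, trace f z * trace g z * ν z i ∂(surf Ω)
  /-- the normal derivative operator `D_ν` on `H₀(Δ,Ω)` -/
  dnu : H0DFun Ω → Euc N → ℝ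
  dnu_mem : ∀ f, MemLp (dnu f) 2 (surf Ω)
  /-- Green's identity `∫_Ω v Δu + ∫_Ω ∇v·∇u = ∫_∂Ω γv D_ν u dσ`,
  characterizing `D_ν u` for `u ∈ H₀(Δ,Ω)` -/
  green : ∀ (f : H0DFun Ω) (v : H1Fun Ω),
    (∫ x in Ω, v.u x * f.lap x) + (∫ x in Ω, rip (v.grad x) (f.grad x))
      = ∫ z, trace v z * dnu f z ∂(surf Ω)

namespace B1Setting

variable (S : B1Setting N)

/-- the surface area `|∂Ω|` of the boundary -/
def area : ℝ := (surf S.Ω univ).toReal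

/-- the `∂`-inner product `[u,v]_∂ = ∫_Ω ∇u·∇v dx + |∂Ω|⁻¹ ∫_∂Ω γu γv dσ` on `H¹(Ω)` -/
def dIP (f g : H1Fun S.Ω) : ℝ :=
  (∫ x in S.Ω, rip (f.grad x) (g.grad x))
    + (S.area)⁻¹ * ∫ z, S.trace f z * S.trace g z ∂(surf S.Ω)

/-- the squared `(∂,Δ)`-norm on `H₀(Δ,Ω)` -/
def pdNormSq (f : H0DFun S.Ω) : ℝ :=
  S.dIP f.toH1Fun f.toH1Fun + ∫ x in S.Ω, (f.lap x) ^ 2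

/-- the functional `M(u) = ∫_∂Ω |D_ν u|² dσ` -/
def bM (f : H0DFun S.Ω) : ℝ := ∫ z, (S.dnu f z) ^ 2 ∂(surf S.Ω)

/-- the Dirichlet Biharmonic Steklov (DBS) eigenproblem: `(q,b)` with `b ≠ 0` and
`∫_Ω Δb Δv dx = q ∫_∂Ω (D_ν b)(D_ν v) dσ` for all `v ∈ H₀(Δ,Ω)`. -/
def IsDBS (q : ℝ) (b : H0DFun S.Ω) : Prop :=
  ¬(b.u =ᵐ[volΩ S.Ω] (0 : Euc N → ℝ)) ∧
    ∀ v : H0DFun S.Ω,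
      ∫ x in S.Ω, b.lap x * v.lap x = q * ∫ z, S.dnu b z * S.dnu v z ∂(surf S.Ω)

/-- Hypothesis (B2): (B1) together with compactness of
`D_ν : H₀(Δ,Ω) → L²(∂Ω, dσ)`. -/
def B2 : Prop :=
  ∀ f : ℕ → H0DFun S.Ω, (∀ n, S.pdNormSq (f n) ≤ 1) →
    ∃ (k : ℕ → ℕ) (g : Euc N → ℝ), StrictMono k ∧
      Tendsto (fun m => eLpNorm (fun z => S.dnu (f (k m)) z - g z) 2 (surf S.Ω))
        atTop (𝓝 0)

/-- Membership in `H₀₀(Δ,Ω) = {u ∈ H₀(Δ,Ω) : D_ν u = 0 on ∂Ω}`. -/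
def IsH00 (f : H0DFun S.Ω) : Prop := S.dnu f =ᵐ[surf S.Ω] (0 : Euc N → ℝ)

/-- Membership in `W = Δ(H₀₀(Δ,Ω)) ⊆ L²(Ω)`. -/
def MemW (g : Euc N → ℝ) : Prop :=
  ∃ ψ : H0DFun S.Ω, S.IsH00 ψ ∧ g =ᵐ[volΩ S.Ω] ψ.lap

end B1Setting

/-! Testing the DBS equation of `b` against `v = ψ ∈ C_c^∞(Ω)` gives
`∫ Δb Δψ = q ∫ D_ν b D_ν ψ dσ`, and `D_ν ψ = 0`: by Green's identity, `∫ g D_ν ψ dσ` equals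
`∫ g Δψ + ∫ ∇g·∇ψ` for every smooth compactly supported `g`, which vanishes by integration by
parts, and an `L²(σ)` function orthogonal to all such `g` is zero. To pass from `C_c^∞` to `C_c²`,
mollify: `Δ(ρₙ ⋆ φ) = ρₙ ⋆ Δφ` converges to `Δφ` pointwise and boundedly, so dominated
convergence applies. Orthonormality in `L²(Ω)` is the `Δ`-orthonormality itself. -/

section PartialDerivatives

open Function

lemma contDiff_pder {g : Euc N → ℝ} {n : ℕ∞} (hg : ContDiff ℝ (n + 1) g) (i : Fin N) :
    ContDiff ℝ n (pder g i) :=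
  (ContinuousLinearMap.apply ℝ ℝ (EuclideanSpace.single i (1 : ℝ))).contDiff.comp
    (hg.fderiv_right le_rfl)

lemma contDiff_one_pder {g : Euc N → ℝ} (hg : ContDiff ℝ 2 g) (i : Fin N) :
    ContDiff ℝ 1 (pder g i) :=
  contDiff_pder (by norm_num; exact hg) i

lemma continuous_pder {g : Euc N → ℝ} (hg : ContDiff ℝ 1 g) (i : Fin N) :
    Continuous (pder g i) :=
  (contDiff_pder (n := 0) (by simpa using hg) i).continuous

lemma pder_eq_zero_of_notMem_tsupport {g : Euc N → ℝ} {x : Euc N} (hx : x ∉ tsupport g)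
    (i : Fin N) : pder g i x = 0 := by
  simp [pder, fderiv_of_notMem_tsupport ℝ hx]

lemma support_pder_subset (g : Euc N → ℝ) (i : Fin N) : support (pder g i) ⊆ tsupport g :=
  fun _ hx => by_contra fun h => hx (pder_eq_zero_of_notMem_tsupport h i)

lemma tsupport_pder_subset (g : Euc N → ℝ) (i : Fin N) : tsupport (pder g i) ⊆ tsupport g :=
  closure_minimal (support_pder_subset g i) isClosed_closure

lemma HasCompactSupport.pder {g : Euc N → ℝ} (hg : HasCompactSupport g) (i : Fin N) :
    HasCompactSupport (pder g i) :=
  hg.mono' (support_pder_subset g i)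

lemma HasCompactSupport.clLap {φ : Euc N → ℝ} (hφ : HasCompactSupport φ) :
    HasCompactSupport (clLap φ) :=
  hφ.mono' fun x hx => by
    obtain ⟨i, -, hi⟩ := Finset.exists_ne_zero_of_sum_ne_zero hx
    exact tsupport_pder_subset φ i (support_pder_subset _ i hi)

lemma HasCompactSupport.clGrad {g : Euc N → ℝ} (hg : HasCompactSupport g) :
    HasCompactSupport (clGrad g) :=
  hg.mono' fun x hx => by_contra fun h => hx <| by
    ext i
    exact pder_eq_zero_of_notMem_tsupport h i

lemma continuous_clLap {φ : Euc N → ℝ} (hφ : ContDiff ℝ 2 φ) : Continuous (clLap φ) :=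
  continuous_finsetSum _ fun i _ => continuous_pder (contDiff_one_pder hφ i) i

lemma continuous_clGrad {g : Euc N → ℝ} (hg : ContDiff ℝ 1 g) : Continuous (clGrad g) :=
  (PiLp.continuous_toLp 2 _).comp (continuous_pi fun i => continuous_pder hg i)

lemma rip_clGrad (g ψ : Euc N → ℝ) (x : Euc N) :
    rip (clGrad g x) (clGrad ψ x) = ∑ i, pder g i x * pder ψ i x := by
  simp [rip, clGrad, PiLp.inner_apply, mul_comm]

end PartialDerivatives

lemma IsTestFun.contDiff {Ω : Set (Euc N)} {φ : Euc N → ℝ} (hφ : IsTestFun Ω φ) {n : ℕ∞} :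
    ContDiff ℝ n φ :=
  hφ.1.of_le (by exact_mod_cast le_top)

lemma IsTestFun.isCc2Fun {Ω : Set (Euc N)} {φ : Euc N → ℝ} (hφ : IsTestFun Ω φ) :
    IsCc2Fun Ω φ :=
  ⟨hφ.contDiff, hφ.2⟩

section IntegrationByParts

lemma integral_mul_pder_eq_neg {f g : Euc N → ℝ} (hf : ContDiff ℝ 1 f) (hg : ContDiff ℝ 1 g)
    (hgc : HasCompactSupport g) (i : Fin N) :
    ∫ x, f x * pder g i x = -∫ x, pder f i x * g x :=
  integral_mul_fderiv_eq_neg_fderiv_mul_of_integrable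
    (((continuous_pder hf i).mul hg.continuous).integrable_of_hasCompactSupport hgc.mul_left)
    ((hf.continuous.mul (continuous_pder hg i)).integrable_of_hasCompactSupport
      (hgc.pder i).mul_left)
    ((hf.continuous.mul hg.continuous).integrable_of_hasCompactSupport hgc.mul_left)
    (fun x _ => hf.differentiable one_ne_zero x) (fun x _ => hg.differentiable one_ne_zero x)

lemma setIntegral_mul_pder_eq_neg {Ω : Set (Euc N)} {f g : Euc N → ℝ} (hf : ContDiff ℝ 1 f)
    (hg : ContDiff ℝ 1 g) (hgc : HasCompactSupport g) (hgΩ : tsupport g ⊆ Ω) (i : Fin N) :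
    ∫ x in Ω, f x * pder g i x = -∫ x in Ω, pder f i x * g x := by
  have hpder : ∀ x ∉ Ω, f x * pder g i x = 0 := fun x hx => by
    rw [pder_eq_zero_of_notMem_tsupport (mt (hgΩ ·) hx), mul_zero]
  have hg0 : ∀ x ∉ Ω, pder f i x * g x = 0 := fun x hx => by
    rw [image_eq_zero_of_notMem_tsupport (mt (hgΩ ·) hx), mul_zero]
  rw [setIntegral_eq_integral_of_forall_compl_eq_zero hpder,
    setIntegral_eq_integral_of_forall_compl_eq_zero hg0]
  exact integral_mul_pder_eq_neg hf hg hgc i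

lemma setIntegral_mul_clLap {Ω : Set (Euc N)} {f ψ : Euc N → ℝ} (hf : ContDiff ℝ 1 f)
    (hψ : IsCc2Fun Ω ψ) :
    ∫ x in Ω, f x * clLap ψ x = -∫ x in Ω, ∑ i, pder f i x * pder ψ i x := by
  have hψc := hψ.2.1
  calc ∫ x in Ω, f x * clLap ψ x = ∑ i, ∫ x in Ω, f x * pder (pder ψ i) i x := by
        simp_rw [clLap, Finset.mul_sum]
        refine integral_finsetSum _ fun i _ => Integrable.integrableOn ?_
        exact Continuous.integrable_of_hasCompactSupport
          (hf.continuous.mul (continuous_pder (contDiff_one_pder hψ.1 i) i))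
          ((hψc.pder i).pder i).mul_left
    _ = ∑ i, -∫ x in Ω, pder f i x * pder ψ i x :=
        Finset.sum_congr rfl fun i _ => setIntegral_mul_pder_eq_neg hf (contDiff_one_pder hψ.1 i)
          (hψc.pder i) ((tsupport_pder_subset ψ i).trans hψ.2.2) i
    _ = -∫ x in Ω, ∑ i, pder f i x * pder ψ i x := by
        rw [Finset.sum_neg_distrib, integral_finsetSum _ fun i _ => Integrable.integrableOn ?_]
        exact Continuous.integrable_of_hasCompactSupport
          ((continuous_pder hf i).mul (continuous_pder (hψ.1.of_le one_le_two) i))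
          (hψc.pder i).mul_left

end IntegrationByParts

def H1Fun.ofContDiff (Ω : Set (Euc N)) {g : Euc N → ℝ} (hg : ContDiff ℝ 1 g)
    (hgc : HasCompactSupport g) : H1Fun Ω where
  u := g
  grad := clGrad g
  u_mem := (hg.continuous.memLp_of_hasCompactSupport hgc).restrict Ω
  grad_mem := ((continuous_clGrad hg).memLp_of_hasCompactSupport hgc.clGrad).restrict Ω
  weak_grad _ hφ i := setIntegral_mul_pder_eq_neg hg hφ.contDiff hφ.2.1 hφ.2.2 i

def H0DFun.ofTestFun {Ω : Set (Euc N)} {ψ : Euc N → ℝ} (hψ : IsTestFun Ω ψ) : H0DFun Ω where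
  toH1Fun := H1Fun.ofContDiff Ω hψ.contDiff hψ.2.1
  lap := clLap ψ
  lap_mem :=
    ((continuous_clLap hψ.contDiff).memLp_of_hasCompactSupport hψ.2.1.clLap).restrict Ω
  weak_lap φ hφ := by
    have h := setIntegral_mul_clLap hφ.contDiff hψ.isCc2Fun
    simp only [mul_comm (φ _), mul_comm (pder φ _ _)] at h
    rw [h, neg_neg]
    rfl
  bc := ⟨fun _ => ψ, fun _ => hψ, by simp [H1Fun.ofContDiff]⟩

namespace B1Setting

variable (S : B1Setting N)

lemma integral_mul_dnu_ofTestFun {ψ g : Euc N → ℝ} (hψ : IsTestFun S.Ω ψ)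
    (hg : ContDiff ℝ 1 g) (hgc : HasCompactSupport g) :
    ∫ z, g z * S.dnu (H0DFun.ofTestFun hψ) z ∂surf S.Ω = 0 := by
  have htrace : S.trace (H1Fun.ofContDiff S.Ω hg hgc) =ᵐ[surf S.Ω] g :=
    S.trace_of_continuous _ hg.continuous.continuousOn
  calc ∫ z, g z * S.dnu (H0DFun.ofTestFun hψ) z ∂surf S.Ω
      = ∫ z, S.trace (H1Fun.ofContDiff S.Ω hg hgc) z * S.dnu (H0DFun.ofTestFun hψ) z
          ∂surf S.Ω := integral_congr_ae (htrace.symm.mul EventuallyEq.rfl)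
    _ = 0 := by
      rw [← S.green]
      simp only [H1Fun.ofContDiff, H0DFun.ofTestFun, rip_clGrad]
      rw [setIntegral_mul_clLap hg hψ.isCc2Fun, neg_add_cancel]

lemma dnu_ofTestFun_ae_eq_zero {ψ : Euc N → ℝ} (hψ : IsTestFun S.Ω ψ) :
    S.dnu (H0DFun.ofTestFun hψ) =ᵐ[surf S.Ω] 0 := by
  have : IsFiniteMeasure (surf S.Ω) := ⟨S.fin_bdry⟩
  exact ae_eq_zero_of_integral_contDiff_smul_eq_zero
    ((S.dnu_mem _).integrable one_le_two).locallyIntegrable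
    fun g hg hgc => S.integral_mul_dnu_ofTestFun hψ (hg.of_le (by simp)) hgc

lemma IsDBS.setIntegral_lap_mul_clLap_eq_zero {S : B1Setting N} {q : ℝ} {b : H0DFun S.Ω}
    (hb : S.IsDBS q b) {ψ : Euc N → ℝ} (hψ : IsTestFun S.Ω ψ) :
    ∫ x in S.Ω, b.lap x * clLap ψ x = 0 := by
  have hdnu : ∫ z, S.dnu b z * S.dnu (H0DFun.ofTestFun hψ) z ∂surf S.Ω = 0 :=
    integral_eq_zero_of_ae <| (S.dnu_ofTestFun_ae_eq_zero hψ).mono fun z hz => by simp [hz]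
  rw [show clLap ψ = (H0DFun.ofTestFun hψ).lap from rfl, hb.2, hdnu, mul_zero]

end B1Setting

section Mollification

open Metric Function ContinuousLinearMap
open scoped Convolution

def stdBump (n : ℕ) : ContDiffBump (0 : Euc N) where
  rIn := 1 / ((n : ℝ) + 2)
  rOut := 1 / ((n : ℝ) + 1)
  rIn_pos := by positivity
  rIn_lt_rOut := by gcongr; linarith

lemma tendsto_stdBump_rOut : Tendsto (fun n => (stdBump (N := N) n).rOut) atTop (𝓝 0) :=
  tendsto_one_div_add_atTop_nhds_zero_nat

def mollify (n : ℕ) (u : Euc N → ℝ) : Euc N → ℝ :=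
  (stdBump n).normed volume ⋆[lsmul ℝ ℝ] u

variable {u : Euc N → ℝ}

lemma contDiff_mollify (hu : Continuous u) (n : ℕ) : ContDiff ℝ (⊤ : ℕ∞) (mollify n u) :=
  (stdBump n).hasCompactSupport_normed.contDiff_convolution_left _
    (stdBump n).contDiff_normed hu.locallyIntegrable

lemma norm_mollify_le {C : ℝ} (hu : Continuous u) (hC : ∀ x, ‖u x‖ ≤ C) (n : ℕ) (x : Euc N) :
    ‖mollify n u x‖ ≤ C := by
  simpa [mollify] using dist_convolution_le (x₀ := x) (z₀ := (0 : ℝ))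
    ((norm_nonneg _).trans (hC 0)) (stdBump n).support_normed_eq.subset
    (stdBump n).nonneg_normed (stdBump n).integral_normed hu.aestronglyMeasurable
    fun y _ => by simpa using hC y

lemma tendsto_mollify (hu : Continuous u) (x : Euc N) :
    Tendsto (fun n => mollify n u x) atTop (𝓝 (u x)) :=
  ContDiffBump.convolution_tendsto_right_of_continuous tendsto_stdBump_rOut hu x

lemma tsupport_mollify_subset (n : ℕ) :
    tsupport (mollify n u) ⊆ cthickening (stdBump (N := N) n).rOut (tsupport u) := by
  refine closure_minimal (fun x hx => ?_) isClosed_cthickening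
  obtain ⟨y, hy, z, hz, rfl⟩ := support_convolution_subset (lsmul ℝ ℝ) hx
  rw [(stdBump n).support_normed_eq, mem_ball_zero_iff] at hy
  refine mem_cthickening_of_dist_le _ z _ _ (subset_closure hz) ?_
  simpa [dist_eq_norm] using hy.le

lemma IsCc2Fun.eventually_isTestFun_mollify {Ω : Set (Euc N)} (hΩ : IsOpen Ω)
    (hu : IsCc2Fun Ω u) : ∀ᶠ n in atTop, IsTestFun Ω (mollify n u) := by
  obtain ⟨δ, hδ, hδΩ⟩ := hu.2.1.exists_thickening_subset_open hΩ hu.2.2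
  filter_upwards [tendsto_stdBump_rOut.eventually (gt_mem_nhds hδ)] with n hn
  exact ⟨contDiff_mollify hu.1.continuous n,
    hu.2.1.isCompact.cthickening.of_isClosed_subset isClosed_closure (tsupport_mollify_subset n),
    (tsupport_mollify_subset n).trans ((cthickening_subset_thickening' hδ hn _).trans hδΩ)⟩

lemma pder_mollify (hu : ContDiff ℝ 1 u) (huc : HasCompactSupport u) (n : ℕ) (i : Fin N) :
    pder (mollify n u) i = mollify n (pder u i) := by
  funext x
  have hk : LocallyIntegrable ((stdBump (N := N) n).normed volume) volume :=
    (stdBump n).integrable_normed.locallyIntegrable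
  rw [pder, mollify, (huc.hasFDerivAt_convolution_right (L := lsmul ℝ ℝ) hk hu x).fderiv,
    convolution_precompR_apply (L := lsmul ℝ ℝ) hk (huc.fderiv (𝕜 := ℝ))
      (hu.continuous_fderiv one_ne_zero)]
  rfl

lemma mollify_sum {ι : Type*} (s : Finset ι) {v : ι → Euc N → ℝ}
    (hv : ∀ i ∈ s, Continuous (v i)) (n : ℕ) :
    mollify n (fun x => ∑ i ∈ s, v i x) = fun x => ∑ i ∈ s, mollify n (v i) x := by
  funext x
  have hconv : ∀ i ∈ s, ConvolutionExists ((stdBump n).normed volume) (v i) (lsmul ℝ ℝ) volume :=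
    fun i hi => (stdBump n).hasCompactSupport_normed.convolutionExists_left _
      (stdBump n).continuous_normed (hv i hi).locallyIntegrable
  simp only [mollify, convolution_def, map_sum]
  exact integral_finsetSum _ fun i hi => hconv i hi x

lemma clLap_mollify (hu : ContDiff ℝ 2 u) (huc : HasCompactSupport u) (n : ℕ) :
    clLap (mollify n u) = mollify n (clLap u) := by
  have hpp : ∀ i, pder (pder (mollify n u) i) i = mollify n (pder (pder u i) i) := fun i => by
    rw [pder_mollify (hu.of_le one_le_two) huc,
      pder_mollify (contDiff_one_pder hu i) (huc.pder i)]
  calc clLap (mollify n u) = fun x => ∑ i, mollify n (pder (pder u i) i) x :=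
        funext fun x => by simp only [clLap, hpp]
    _ = mollify n (clLap u) :=
        (mollify_sum _ (fun i _ => continuous_pder (contDiff_one_pder hu i) i) n).symm

end Mollification

lemma setIntegral_mul_clLap_eq_zero_of_isTestFun {Ω : Set (Euc N)} (hΩ : IsOpen Ω)
    {h : Euc N → ℝ} (hh : Integrable h (volΩ Ω))
    (H : ∀ ψ, IsTestFun Ω ψ → ∫ x in Ω, h x * clLap ψ x = 0) {φ : Euc N → ℝ}
    (hφ : IsCc2Fun Ω φ) : ∫ x in Ω, h x * clLap φ x = 0 := by
  have hcont := continuous_clLap hφ.1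
  obtain ⟨C, hC⟩ := hcont.bounded_above_of_compact_support hφ.2.1.clLap
  have hlim : Tendsto (fun n => ∫ x in Ω, h x * clLap (mollify n φ) x) atTop
      (𝓝 (∫ x in Ω, h x * clLap φ x)) := by
    simp_rw [clLap_mollify hφ.1 hφ.2.1]
    refine tendsto_integral_of_dominated_convergence (fun x => ‖h x‖ * C)
      (fun n => hh.aestronglyMeasurable.mul
        (contDiff_mollify hcont n).continuous.aestronglyMeasurable)
      (hh.norm.mul_const C) (fun n => ae_of_all _ fun x => ?_)
      (ae_of_all _ fun x => (tendsto_mollify hcont x).const_mul (h x))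
    rw [norm_mul]
    exact mul_le_mul_of_nonneg_left (norm_mollify_le hcont hC n x) (norm_nonneg _)
  refine tendsto_nhds_unique hlim (tendsto_const_nhds.congr' ?_)
  filter_upwards [hφ.eventually_isTestFun_mollify hΩ] with n hn
  exact (H _ hn).symm

theorem statement_11_general {N : ℕ} (S : B1Setting N)
    (q : ℕ → ℝ) (b : ℕ → H0DFun S.Ω)
    (hDBS : ∀ j, S.IsDBS (q j) (b j))
    (hON : ∀ i j, lapIP (b i) (b j) = if i = j then 1 else 0) :
    (∀ j, MemL2H S.Ω (b j).lap) ∧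
    (∀ i j, ∫ x in S.Ω, (b i).lap x * (b j).lap x = if i = j then (1 : ℝ) else 0) := by
  have : IsFiniteMeasure (volΩ S.Ω) := ⟨by simpa [volΩ] using S.bdd.measure_lt_top⟩
  refine ⟨fun j => ⟨(b j).lap_mem, fun φ hφ => ?_⟩, hON⟩
  exact setIntegral_mul_clLap_eq_zero_of_isTestFun S.opn ((b j).lap_mem.integrable one_le_two)
    (fun ψ hψ => (hDBS j).setIntegral_lap_mul_clLap_eq_zero hψ) hφ

/-- under (B2), for a `Δ`-orthonormal sequence of DBS
eigenfunctions `b_j`, the functions `h_j = Δb_j` are weakly harmonic, belong to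
the harmonic Bergman space `L²_H(Ω)`, and form an orthonormal family in `L²(Ω)`. -/
theorem statement_11 {N : ℕ} (hN : 2 ≤ N) (S : B1Setting N) (hB2 : S.B2)
    (q : ℕ → ℝ) (b : ℕ → H0DFun S.Ω)
    (hDBS : ∀ j, S.IsDBS (q j) (b j))
    (hON : ∀ i j, lapIP (b i) (b j) = if i = j then 1 else 0) :
    (∀ j, MemL2H S.Ω (b j).lap) ∧
    (∀ i j, ∫ x in S.Ω, (b i).lap x * (b j).lap x = if i = j then (1 : ℝ) else 0) :=
  statement_11_general S q b hDBS hON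

end
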